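/- Existence for the obstacle DPP: under the assumptions α ∈ [0,1), β = 1−α, F : Γ → ℝ and Ψ : ℝ^N → ℝ bounded Borel with Ψ ≤ F on Γ, there exists a bounded Borel function u : X → ℝ satisfying u(x) = max{Ψ(x), (α/2) sup_{B_ε(x)} u + (α/2) inf_{B_ε(x)} u + β ⨍_{B_ε(x)} u} for x ∈ Ω and u = F on Γ. -/

import Mathlib

/-!
The solution is the increasing limit `u = sup_n u_n` of the Perron iterates `u_{n+1} = T u_n`,
started from `-C` in `Ω` and from `F` outside. On Borel functions bounded by `C` the operator `T`
is monotone, so the iterates increase and `u ≤ T u`. Conversely, with `s_n = sup (u - u_n)`, the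
supremum and infimum over `B_ε(x)` move by at most `s_n` when `u_n` is replaced by `u`, and since
`u - u_n` vanishes outside `Ω` its average over any ball is at most `a_n = |B_ε|⁻¹ ∫_Ω (u - u_n)`,
which tends to `0` by dominated convergence. Hence `T u ≤ u_{n+1} + α s_n + β a_n`, so
`s_{n+1} ≤ α s_n + β a_n`; as `α < 1` this forces `s_n → 0`, and then `T u ≤ u`.
-/

open MeasureTheory Metric Set Classical

/-- The obstacle dynamic programming operator. -/
noncomputable def dppT {N : ℕ} (Ω : Set (EuclideanSpace ℝ (Fin N)))
    (Ψ : EuclideanSpace ℝ (Fin N) → ℝ) (α β ε : ℝ)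
    (v : EuclideanSpace ℝ (Fin N) → ℝ) : EuclideanSpace ℝ (Fin N) → ℝ :=
  fun x => if x ∈ Ω then
      max (Ψ x) (α / 2 * sSup (v '' ball x ε) + α / 2 * sInf (v '' ball x ε)
        + β * ⨍ y in ball x ε, v y)
    else v x

open Filter Topology
open scoped ENNReal

theorem bddAbove_range_of_abs_le {ι : Type*} {f : ι → ℝ} {C : ℝ} (h : ∀ i, |f i| ≤ C) :
    BddAbove (range f) :=
  ⟨C, forall_mem_range.2 fun i => le_of_abs_le (h i)⟩

theorem bddBelow_range_of_abs_le {ι : Type*} {f : ι → ℝ} {C : ℝ} (h : ∀ i, |f i| ≤ C) :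
    BddBelow (range f) :=
  ⟨-C, forall_mem_range.2 fun i => neg_le_of_abs_le (h i)⟩

section BallStatistics

variable {X : Type*} [PseudoMetricSpace X] {v : X → ℝ} {ε : ℝ}

theorem lowerSemicontinuous_sSup_image_ball (hε : 0 < ε) (hv : BddAbove (range v)) :
    LowerSemicontinuous fun x => sSup (v '' ball x ε) := by
  intro x a ha
  obtain ⟨_, ⟨y, hy, rfl⟩, hay⟩ := exists_lt_of_lt_csSup ((nonempty_ball.2 hε).image v) ha
  filter_upwards [isOpen_ball.mem_nhds (mem_ball_comm.1 hy)] with x' hx'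
  exact hay.trans_le (le_csSup (hv.mono (image_subset_range _ _)) ⟨y, mem_ball_comm.1 hx', rfl⟩)

theorem upperSemicontinuous_sInf_image_ball (hε : 0 < ε) (hv : BddBelow (range v)) :
    UpperSemicontinuous fun x => sInf (v '' ball x ε) := by
  intro x a ha
  obtain ⟨_, ⟨y, hy, rfl⟩, hya⟩ := exists_lt_of_csInf_lt ((nonempty_ball.2 hε).image v) ha
  filter_upwards [isOpen_ball.mem_nhds (mem_ball_comm.1 hy)] with x' hx'
  exact (csInf_le (hv.mono (image_subset_range _ _)) ⟨y, mem_ball_comm.1 hx', rfl⟩).trans_lt hya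

theorem measurable_setIntegral_ball [MeasurableSpace X] [OpensMeasurableSpace X]
    [SecondCountableTopology X] {μ : Measure X} [SFinite μ] (hv : Measurable v) :
    Measurable fun x => ∫ y in ball x ε, v y ∂μ := by
  have hS : MeasurableSet {p : X × X | dist p.2 p.1 < ε} :=
    (isOpen_lt (continuous_snd.dist continuous_fst) continuous_const).measurableSet
  have h := ((hv.comp measurable_snd).indicator hS).stronglyMeasurable.integral_prod_right' (ν := μ)
  simp_rw [← integral_indicator measurableSet_ball]
  exact h.measurable

end BallStatistics

section Averages

variable {X : Type*} [MeasurableSpace X] {μ : Measure X} {s t : Set X} {f g : X → ℝ} {C : ℝ}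

theorem Measurable.integrableOn_of_abs_le (hf : Measurable f) (hfC : ∀ y, |f y| ≤ C)
    (hs : μ s ≠ ∞) : IntegrableOn f s μ :=
  Measure.integrableOn_of_bounded hs hf.aestronglyMeasurable (ae_of_all _ hfC)

theorem setAverage_mono (hf : IntegrableOn f s μ) (hg : IntegrableOn g s μ) (h : f ≤ g) :
    ⨍ y in s, f y ∂μ ≤ ⨍ y in s, g y ∂μ := by
  simp only [setAverage_eq, smul_eq_mul]
  exact mul_le_mul_of_nonneg_left (setIntegral_mono hf hg h) (inv_nonneg.2 measureReal_nonneg)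

theorem abs_setAverage_le (hs : μ s < ∞) (hC : 0 ≤ C) (hf : ∀ y ∈ s, |f y| ≤ C) :
    |⨍ y in s, f y ∂μ| ≤ C := by
  rw [setAverage_eq, smul_eq_mul, abs_mul, abs_inv, abs_of_nonneg measureReal_nonneg]
  rcases measureReal_nonneg.eq_or_lt' (a := μ.real s) with h0 | hpos
  · simpa [h0] using hC
  rw [inv_mul_le_iff₀ hpos, mul_comm]
  exact norm_setIntegral_le_of_norm_le_const (f := f) hs hf

theorem setIntegral_le_setIntegral_of_forall_notMem_eq_zero (hs : MeasurableSet s)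
    (hg : IntegrableOn g t μ) (hg0 : 0 ≤ g) (hgt : ∀ y ∉ t, g y = 0) :
    ∫ y in s, g y ∂μ ≤ ∫ y in t, g y ∂μ := by
  rw [setIntegral_eq_of_subset_of_forall_sdiff_eq_zero hs inter_subset_left
    fun y hy => hgt y fun hyt => hy.2 ⟨hy.1, hyt⟩]
  exact setIntegral_mono_set hg (ae_of_all _ hg0) inter_subset_right.eventuallyLE

end Averages

section HaarBalls

variable {E : Type*} [NormedAddCommGroup E] [MeasurableSpace E] [BorelSpace E]
  (μ : Measure E) [μ.IsAddHaarMeasure] {v w : E → ℝ} {ε : ℝ}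

theorem measurable_setAverage_ball [ProperSpace E] (hv : Measurable v) :
    Measurable fun x => ⨍ y in ball x ε, v y ∂μ := by
  simp_rw [setAverage_eq, smul_eq_mul, measureReal_def, Measure.addHaar_ball_center μ _ ε]
  exact (measurable_setIntegral_ball (μ := μ) hv).const_mul _

theorem setAverage_ball_le_add {s : Set E} {x : E}
    (hv : IntegrableOn v (ball x ε) μ) (hw : IntegrableOn w (ball x ε) μ)
    (hwvs : IntegrableOn (w - v) s μ) (hvw : v ≤ w) (hwv : ∀ y ∉ s, w y = v y) :
    ⨍ y in ball x ε, w y ∂μ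
      ≤ ⨍ y in ball x ε, v y ∂μ + (μ.real (ball 0 ε))⁻¹ * ∫ y in s, (w - v) y ∂μ := by
  have hint : ∫ y in ball x ε, (w - v) y ∂μ ≤ ∫ y in s, (w - v) y ∂μ :=
    setIntegral_le_setIntegral_of_forall_notMem_eq_zero measurableSet_ball hwvs
      (sub_nonneg.2 <| hvw ·) fun y hy => sub_eq_zero.2 (hwv y hy)
  simp only [setAverage_eq, smul_eq_mul, measureReal_def, Measure.addHaar_ball_center μ x ε,
    ← mul_add]
  refine mul_le_mul_of_nonneg_left ?_ (inv_nonneg.2 ENNReal.toReal_nonneg)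
  rw [← sub_le_iff_le_add', ← integral_sub hw hv]
  exact hint

end HaarBalls

section Mean

variable {X : Type*} [PseudoMetricSpace X] [MeasurableSpace X] {μ : Measure X}
  {α β ε s a C : ℝ} {v w : X → ℝ} {x : X}

noncomputable def dppMean (μ : Measure X) (α β ε : ℝ) (v : X → ℝ) (x : X) : ℝ :=
  α / 2 * sSup (v '' ball x ε) + α / 2 * sInf (v '' ball x ε) + β * ⨍ y in ball x ε, v y ∂μ

theorem dppMean_le_add (hα : 0 ≤ α) (hβ : 0 ≤ β) (hε : 0 < ε) (hv : BddAbove (range v))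
    (hw : BddBelow (range w)) (hwv : ∀ y, w y ≤ v y + s)
    (havg : ⨍ y in ball x ε, w y ∂μ ≤ ⨍ y in ball x ε, v y ∂μ + a) :
    dppMean μ α β ε w x ≤ dppMean μ α β ε v x + (α * s + β * a) := by
  have hne : (ball x ε).Nonempty := nonempty_ball.2 hε
  have hsup : sSup (w '' ball x ε) ≤ sSup (v '' ball x ε) + s :=
    csSup_le (hne.image w) <| forall_mem_image.2 fun y hy =>
      (hwv y).trans <| (add_le_add_iff_right s).2 <|
        le_csSup (hv.mono (image_subset_range _ _)) ⟨y, hy, rfl⟩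
  have hinf : sInf (w '' ball x ε) ≤ sInf (v '' ball x ε) + s :=
    sub_le_iff_le_add.1 <| le_csInf (hne.image v) <| forall_mem_image.2 fun y hy =>
      sub_le_iff_le_add.2 <|
        (csInf_le (hw.mono (image_subset_range _ _)) ⟨y, hy, rfl⟩).trans (hwv y)
  calc dppMean μ α β ε w x
      ≤ α / 2 * (sSup (v '' ball x ε) + s) + α / 2 * (sInf (v '' ball x ε) + s)
        + β * (⨍ y in ball x ε, v y ∂μ + a) := by unfold dppMean; gcongr
    _ = dppMean μ α β ε v x + (α * s + β * a) := by unfold dppMean; ring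

theorem dppMean_le (hα : 0 ≤ α) (hβ : 0 ≤ β) (hε : 0 < ε) (hB : μ (ball x ε) < ∞)
    (hvC : ∀ y, |v y| ≤ C) : dppMean μ α β ε v x ≤ (α + β) * C := by
  have hne : (ball x ε).Nonempty := nonempty_ball.2 hε
  have hsup : sSup (v '' ball x ε) ≤ C :=
    csSup_le (hne.image v) <| forall_mem_image.2 fun y _ => le_of_abs_le (hvC y)
  have hinf : sInf (v '' ball x ε) ≤ C :=
    (csInf_le ((bddBelow_range_of_abs_le hvC).mono (image_subset_range _ _))
      (mem_image_of_mem v (mem_ball_self hε))).trans (le_of_abs_le (hvC x))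
  have havg : ⨍ y in ball x ε, v y ∂μ ≤ C :=
    le_of_abs_le (abs_setAverage_le hB ((abs_nonneg _).trans (hvC x)) fun y _ => hvC y)
  calc dppMean μ α β ε v x ≤ α / 2 * C + α / 2 * C + β * C := by unfold dppMean; gcongr
    _ = (α + β) * C := by ring

theorem measurable_dppMean {E : Type*} [NormedAddCommGroup E] [MeasurableSpace E] [BorelSpace E]
    [ProperSpace E] {μ : Measure E} [μ.IsAddHaarMeasure] {v : E → ℝ} (hε : 0 < ε)
    (hv : Measurable v) (hva : BddAbove (range v)) (hvb : BddBelow (range v)) :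
    Measurable (dppMean μ α β ε v) :=
  (((lowerSemicontinuous_sSup_image_ball hε hva).measurable.const_mul _).add
    ((upperSemicontinuous_sInf_image_ball hε hvb).measurable.const_mul _)).add
    ((measurable_setAverage_ball μ hv).const_mul _)

end Mean

section Operator

variable {N : ℕ} {Ω : Set (EuclideanSpace ℝ (Fin N))} {Ψ v w : EuclideanSpace ℝ (Fin N) → ℝ}
  {α β ε s C : ℝ} {x : EuclideanSpace ℝ (Fin N)}

theorem dppT_of_mem (hx : x ∈ Ω) :
    dppT Ω Ψ α β ε v x = max (Ψ x) (dppMean volume α β ε v x) :=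
  if_pos hx

theorem dppT_of_notMem (hx : x ∉ Ω) : dppT Ω Ψ α β ε v x = v x :=
  if_neg hx

theorem measurable_dppT (hΩ : MeasurableSet Ω) (hΨ : Measurable Ψ) (hε : 0 < ε)
    (hv : Measurable v) (hvC : ∀ y, |v y| ≤ C) : Measurable (dppT Ω Ψ α β ε v) :=
  Measurable.ite hΩ (hΨ.max (measurable_dppMean hε hv (bddAbove_range_of_abs_le hvC)
    (bddBelow_range_of_abs_le hvC))) hv

theorem abs_dppT_le (hα : 0 ≤ α) (hα₁ : α ≤ 1) (hε : 0 < ε) (hΨC : ∀ y, |Ψ y| ≤ C)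
    (hvC : ∀ y, |v y| ≤ C) (x : EuclideanSpace ℝ (Fin N)) :
    |dppT Ω Ψ α (1 - α) ε v x| ≤ C := by
  by_cases hx : x ∈ Ω
  · have hmean : dppMean volume α (1 - α) ε v x ≤ C := by
      simpa using dppMean_le hα (sub_nonneg.2 hα₁) hε measure_ball_lt_top hvC
    rw [dppT_of_mem hx]
    exact abs_le.2 ⟨(neg_le_of_abs_le (hΨC x)).trans (le_max_left _ _),
      max_le (le_of_abs_le (hΨC x)) hmean⟩
  · rw [dppT_of_notMem hx]
    exact hvC x

theorem dppT_mono (hα : 0 ≤ α) (hβ : 0 ≤ β) (hε : 0 < ε) (hv : Measurable v)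
    (hw : Measurable w) (hvC : ∀ y, |v y| ≤ C) (hwC : ∀ y, |w y| ≤ C) (hvw : v ≤ w) :
    dppT Ω Ψ α β ε v ≤ dppT Ω Ψ α β ε w := by
  intro x
  by_cases hx : x ∈ Ω
  · rw [dppT_of_mem hx, dppT_of_mem hx]
    have havg := setAverage_mono (hv.integrableOn_of_abs_le hvC measure_ball_lt_top.ne)
      (hw.integrableOn_of_abs_le hwC measure_ball_lt_top.ne) hvw (s := ball x ε) (μ := volume)
    refine max_le_max le_rfl ?_
    simpa using dppMean_le_add (s := 0) (a := 0) hα hβ hε (bddAbove_range_of_abs_le hwC)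
      (bddBelow_range_of_abs_le hvC) (fun y => by simpa using hvw y) (by simpa using havg)
  · rw [dppT_of_notMem hx, dppT_of_notMem hx]
    exact hvw x

theorem dppT_le_add (hΩ : volume Ω ≠ ∞) (hα : 0 ≤ α) (hβ : 0 ≤ β) (hε : 0 < ε)
    (hv : Measurable v) (hw : Measurable w) (hvC : ∀ y, |v y| ≤ C) (hwC : ∀ y, |w y| ≤ C)
    (hs : 0 ≤ s) (hvw : v ≤ w) (hwv : ∀ y, w y ≤ v y + s) (hΩw : ∀ y ∉ Ω, w y = v y)
    (x : EuclideanSpace ℝ (Fin N)) :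
    dppT Ω Ψ α β ε w x ≤ dppT Ω Ψ α β ε v x
      + (α * s + β * ((volume.real (ball (0 : EuclideanSpace ℝ (Fin N)) ε))⁻¹
        * ∫ y in Ω, (w - v) y)) := by
  have hgap : 0 ≤ (volume.real (ball (0 : EuclideanSpace ℝ (Fin N)) ε))⁻¹
      * ∫ y in Ω, (w - v) y :=
    mul_nonneg (inv_nonneg.2 measureReal_nonneg)
      (setIntegral_nonneg_of_ae (ae_of_all _ (sub_nonneg.2 <| hvw ·)))
  have hδ := add_nonneg (mul_nonneg hα hs) (mul_nonneg hβ hgap)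
  by_cases hx : x ∈ Ω
  · rw [dppT_of_mem hx, dppT_of_mem hx]
    have hmean := dppMean_le_add (x := x) hα hβ hε (bddAbove_range_of_abs_le hvC)
      (bddBelow_range_of_abs_le hwC) hwv <| setAverage_ball_le_add volume
        (hv.integrableOn_of_abs_le hvC measure_ball_lt_top.ne)
        (hw.integrableOn_of_abs_le hwC measure_ball_lt_top.ne)
        ((hw.integrableOn_of_abs_le hwC hΩ).sub (hv.integrableOn_of_abs_le hvC hΩ)) hvw hΩw
    exact max_le ((le_max_left _ _).trans (le_add_of_nonneg_right hδ))
      (hmean.trans (add_le_add_left (le_max_right _ _) _))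
  · rw [dppT_of_notMem hx, dppT_of_notMem hx, hΩw x hx]
    exact le_add_of_nonneg_right hδ

end Operator

theorem tendsto_zero_of_antitone_of_le_mul_add {s b : ℕ → ℝ} {α : ℝ} (hα : α < 1)
    (hs : Antitone s) (hs₀ : ∀ n, 0 ≤ s n) (hb : Tendsto b atTop (𝓝 0))
    (hsb : ∀ n, s (n + 1) ≤ α * s n + b n) : Tendsto s atTop (𝓝 0) := by
  have hL := tendsto_atTop_ciInf hs ⟨0, forall_mem_range.2 hs₀⟩
  have hL₀ : 0 ≤ ⨅ n, s n := le_ciInf hs₀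
  have hLα : ⨅ n, s n ≤ α * (⨅ n, s n) + 0 :=
    le_of_tendsto_of_tendsto (hL.comp (tendsto_add_atTop_nat 1)) ((hL.const_mul α).add hb)
      (Eventually.of_forall hsb)
  rwa [show ⨅ n, s n = 0 by nlinarith] at hL

structure ObstacleDPP (N : ℕ) where
  Ω : Set (EuclideanSpace ℝ (Fin N))
  Ψ : EuclideanSpace ℝ (Fin N) → ℝ
  F : EuclideanSpace ℝ (Fin N) → ℝ
  α : ℝ
  ε : ℝ
  C : ℝ
  measurableSet_Ω : MeasurableSet Ω
  volume_Ω_ne_top : volume Ω ≠ ∞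
  measurable_Ψ : Measurable Ψ
  measurable_F : Measurable F
  abs_Ψ_le : ∀ x, |Ψ x| ≤ C
  abs_F_le : ∀ x, |F x| ≤ C
  α_nonneg : 0 ≤ α
  α_lt_one : α < 1
  ε_pos : 0 < ε

namespace ObstacleDPP

variable {N : ℕ} (P : ObstacleDPP N) {v w : EuclideanSpace ℝ (Fin N) → ℝ}
  {x : EuclideanSpace ℝ (Fin N)}

noncomputable abbrev T : (EuclideanSpace ℝ (Fin N) → ℝ) → EuclideanSpace ℝ (Fin N) → ℝ :=
  dppT P.Ω P.Ψ P.α (1 - P.α) P.ε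

noncomputable def iter : ℕ → EuclideanSpace ℝ (Fin N) → ℝ
  | 0 => fun x => if x ∈ P.Ω then -P.C else P.F x
  | n + 1 => P.T (iter n)

noncomputable def limit (x : EuclideanSpace ℝ (Fin N)) : ℝ :=
  ⨆ n, P.iter n x

theorem iter_zero_of_mem (hx : x ∈ P.Ω) : P.iter 0 x = -P.C :=
  if_pos hx

theorem C_nonneg : 0 ≤ P.C :=
  (abs_nonneg _).trans (P.abs_F_le 0)

theorem T_mono (hv : Measurable v) (hw : Measurable w) (hvC : ∀ y, |v y| ≤ P.C)
    (hwC : ∀ y, |w y| ≤ P.C) (hvw : v ≤ w) : P.T v ≤ P.T w :=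
  dppT_mono P.α_nonneg (sub_nonneg.2 P.α_lt_one.le) P.ε_pos hv hw hvC hwC hvw

theorem iter_of_notMem (n : ℕ) (hx : x ∉ P.Ω) : P.iter n x = P.F x := by
  induction n with
  | zero => exact if_neg hx
  | succ n ih => exact (dppT_of_notMem hx).trans ih

theorem abs_iter_le (n : ℕ) (x : EuclideanSpace ℝ (Fin N)) : |P.iter n x| ≤ P.C := by
  induction n generalizing x with
  | zero =>
    by_cases hx : x ∈ P.Ω
    · rw [P.iter_zero_of_mem hx, abs_neg, abs_of_nonneg P.C_nonneg]
    · rw [P.iter_of_notMem 0 hx]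
      exact P.abs_F_le x
  | succ n ih => exact abs_dppT_le P.α_nonneg P.α_lt_one.le P.ε_pos P.abs_Ψ_le ih x

theorem measurable_iter (n : ℕ) : Measurable (P.iter n) := by
  induction n with
  | zero => exact Measurable.ite P.measurableSet_Ω measurable_const P.measurable_F
  | succ n ih => exact measurable_dppT P.measurableSet_Ω P.measurable_Ψ P.ε_pos ih (P.abs_iter_le n)

theorem monotone_iter : Monotone P.iter := by
  refine monotone_nat_of_le_succ fun n => ?_
  induction n with
  | zero =>
    intro x
    by_cases hx : x ∈ P.Ω
    · rw [P.iter_zero_of_mem hx, iter, T, dppT_of_mem hx]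
      exact (neg_le_of_abs_le (P.abs_Ψ_le x)).trans (le_max_left _ _)
    · rw [P.iter_of_notMem 0 hx, P.iter_of_notMem 1 hx]
  | succ n ih =>
    exact P.T_mono (P.measurable_iter n) (P.measurable_iter (n + 1)) (P.abs_iter_le n)
      (P.abs_iter_le (n + 1)) ih

theorem tendsto_iter (x : EuclideanSpace ℝ (Fin N)) :
    Tendsto (fun n => P.iter n x) atTop (𝓝 (P.limit x)) :=
  tendsto_atTop_ciSup (fun _ _ h => P.monotone_iter h x)
    (bddAbove_range_of_abs_le (P.abs_iter_le · x))

theorem iter_le_limit (n : ℕ) : P.iter n ≤ P.limit := fun x =>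
  le_ciSup (bddAbove_range_of_abs_le (P.abs_iter_le · x)) n

theorem abs_limit_le (x : EuclideanSpace ℝ (Fin N)) : |P.limit x| ≤ P.C :=
  le_of_tendsto' (P.tendsto_iter x).abs fun n => P.abs_iter_le n x

theorem measurable_limit : Measurable P.limit :=
  measurable_of_tendsto_metrizable P.measurable_iter (tendsto_pi_nhds.2 P.tendsto_iter)

theorem limit_of_notMem (hx : x ∉ P.Ω) : P.limit x = P.F x :=
  tendsto_nhds_unique (P.tendsto_iter x) <| by
    simp only [P.iter_of_notMem _ hx, tendsto_const_nhds]

theorem le_T_limit : P.limit ≤ P.T P.limit := fun x =>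
  ciSup_le fun n => (P.monotone_iter n.le_succ x).trans <|
    P.T_mono (P.measurable_iter n) P.measurable_limit (P.abs_iter_le n) P.abs_limit_le
      (P.iter_le_limit n) x

noncomputable def supGap (n : ℕ) : ℝ :=
  sSup (range (P.limit - P.iter n))

noncomputable def intGap (n : ℕ) : ℝ :=
  (volume.real (ball (0 : EuclideanSpace ℝ (Fin N)) P.ε))⁻¹ * ∫ y in P.Ω, (P.limit - P.iter n) y

theorem abs_limit_sub_iter_le (n : ℕ) (x : EuclideanSpace ℝ (Fin N)) :
    |(P.limit - P.iter n) x| ≤ 2 * P.C :=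
  (abs_sub _ _).trans (by linarith [P.abs_limit_le x, P.abs_iter_le n x])

theorem limit_sub_iter_le_supGap (n : ℕ) (x : EuclideanSpace ℝ (Fin N)) :
    P.limit x - P.iter n x ≤ P.supGap n :=
  le_csSup (bddAbove_range_of_abs_le (P.abs_limit_sub_iter_le n)) ⟨x, rfl⟩

theorem supGap_nonneg (n : ℕ) : 0 ≤ P.supGap n :=
  (sub_nonneg.2 (P.iter_le_limit n 0)).trans (P.limit_sub_iter_le_supGap n 0)

theorem T_limit_le (n : ℕ) (x : EuclideanSpace ℝ (Fin N)) :
    P.T P.limit x ≤ P.iter (n + 1) x + (P.α * P.supGap n + (1 - P.α) * P.intGap n) :=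
  dppT_le_add P.volume_Ω_ne_top P.α_nonneg (sub_nonneg.2 P.α_lt_one.le) P.ε_pos
    (P.measurable_iter n) P.measurable_limit (P.abs_iter_le n) P.abs_limit_le
    (P.supGap_nonneg n) (P.iter_le_limit n)
    (fun y => by linarith [P.limit_sub_iter_le_supGap n y])
    (fun y hy => by rw [P.limit_of_notMem hy, P.iter_of_notMem n hy]) x

theorem supGap_succ_le (n : ℕ) :
    P.supGap (n + 1) ≤ P.α * P.supGap n + (1 - P.α) * P.intGap n :=
  csSup_le (range_nonempty _) <| forall_mem_range.2 fun x => by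
    simp only [Pi.sub_apply]
    linarith [P.le_T_limit x, P.T_limit_le n x]

theorem antitone_supGap : Antitone P.supGap :=
  antitone_nat_of_succ_le fun n => csSup_le (range_nonempty _) <| forall_mem_range.2 fun x =>
    (sub_le_sub_left (P.monotone_iter n.le_succ x) _).trans (P.limit_sub_iter_le_supGap n x)

theorem tendsto_intGap : Tendsto P.intGap atTop (𝓝 0) := by
  have h := tendsto_integral_of_dominated_convergence (μ := volume.restrict P.Ω)
    (F := fun n => P.limit - P.iter n) (f := 0) (fun _ => 2 * P.C)
    (fun n => (P.measurable_limit.sub (P.measurable_iter n)).aestronglyMeasurable)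
    (integrableOn_const P.volume_Ω_ne_top)
    (fun n => ae_of_all _ (P.abs_limit_sub_iter_le n))
    (ae_of_all _ fun x => by simpa using (P.tendsto_iter x).const_sub (P.limit x))
  unfold intGap
  simpa using h.const_mul (volume.real (ball (0 : EuclideanSpace ℝ (Fin N)) P.ε))⁻¹

theorem tendsto_supGap : Tendsto P.supGap atTop (𝓝 0) :=
  tendsto_zero_of_antitone_of_le_mul_add P.α_lt_one P.antitone_supGap P.supGap_nonneg
    (by simpa using P.tendsto_intGap.const_mul (1 - P.α)) P.supGap_succ_le

theorem T_limit : P.T P.limit = P.limit := by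
  funext x
  refine le_antisymm ?_ (P.le_T_limit x)
  have h : Tendsto (fun n => P.limit x + (P.α * P.supGap n + (1 - P.α) * P.intGap n))
      atTop (𝓝 (P.limit x)) := by
    simpa using tendsto_const_nhds.add
      ((P.tendsto_supGap.const_mul P.α).add (P.tendsto_intGap.const_mul (1 - P.α)))
  exact le_of_tendsto_of_tendsto' tendsto_const_nhds h fun n =>
    (P.T_limit_le n x).trans (add_le_add_left (P.iter_le_limit (n + 1) x) _)

end ObstacleDPP

theorem dpp_existence_general {N : ℕ} (Ω : Set (EuclideanSpace ℝ (Fin N)))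
    (hΩo : IsOpen Ω) (hΩb : Bornology.IsBounded Ω)
    (ε₀ ε α : ℝ) (hε : 0 < ε)
    (hα : α ∈ Set.Ico (0:ℝ) 1)
    (Γ : Set (EuclideanSpace ℝ (Fin N)))
    (hΓ : Γ = {x | x ∉ Ω ∧ Metric.infDist x Ω < ε₀})
    (F Ψ : EuclideanSpace ℝ (Fin N) → ℝ) (hF : Measurable F) (hΨ : Measurable Ψ)
    (CF CΨ : ℝ) (hFb : ∀ x, |F x| ≤ CF) (hΨb : ∀ x, |Ψ x| ≤ CΨ) :
    ∃ u : EuclideanSpace ℝ (Fin N) → ℝ, Measurable u ∧ (∃ C, ∀ x, |u x| ≤ C) ∧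
      (∀ x ∈ Ω, u x = dppT Ω Ψ α (1 - α) ε u x) ∧ (∀ x ∈ Γ, u x = F x) := by
  let P : ObstacleDPP N :=
    { Ω, Ψ, F, α, ε
      C := max CF CΨ
      measurableSet_Ω := hΩo.measurableSet
      volume_Ω_ne_top := hΩb.measure_lt_top.ne
      measurable_Ψ := hΨ
      measurable_F := hF
      abs_Ψ_le := fun x => (hΨb x).trans (le_max_right _ _)
      abs_F_le := fun x => (hFb x).trans (le_max_left _ _)
      α_nonneg := hα.1
      α_lt_one := hα.2
      ε_pos := hε }
  refine ⟨P.limit, P.measurable_limit, ⟨P.C, P.abs_limit_le⟩,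
    fun x _ => (congrFun P.T_limit x).symm, fun x hx => P.limit_of_notMem ?_⟩
  rw [hΓ] at hx
  exact hx.1

/-- Existence of a bounded Borel solution of the obstacle DPP. -/
theorem dpp_existence {N : ℕ} (Ω : Set (EuclideanSpace ℝ (Fin N)))
    (hΩo : IsOpen Ω) (hΩb : Bornology.IsBounded Ω)
    (ε₀ ε α : ℝ) (hε₀ : 0 < ε₀) (hε : 0 < ε) (hεε₀ : ε ≤ ε₀)
    (hα : α ∈ Set.Ico (0:ℝ) 1)
    (Γ : Set (EuclideanSpace ℝ (Fin N)))
    (hΓ : Γ = {x | x ∉ Ω ∧ Metric.infDist x Ω < ε₀})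
    (X : Set (EuclideanSpace ℝ (Fin N))) (hX : X = Ω ∪ Γ)
    (F Ψ : EuclideanSpace ℝ (Fin N) → ℝ) (hF : Measurable F) (hΨ : Measurable Ψ)
    (CF CΨ : ℝ) (hFb : ∀ x, |F x| ≤ CF) (hΨb : ∀ x, |Ψ x| ≤ CΨ)
    (hΨF : ∀ x ∈ Γ, Ψ x ≤ F x) :
    ∃ u : EuclideanSpace ℝ (Fin N) → ℝ, Measurable u ∧ (∃ C, ∀ x, |u x| ≤ C) ∧
      (∀ x ∈ Ω, u x = dppT Ω Ψ α (1 - α) ε u x) ∧ (∀ x ∈ Γ, u x = F x) :=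
  dpp_existence_general Ω hΩo hΩb ε₀ ε α hε hα Γ hΓ F Ψ hF hΨ CF CΨ hFb hΨb
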